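/- Let 0 < u < √2 and let v = v(u) > 0 be the unique solution of v²/u² = ∫_0^v t/(1 - e^{-t}) dt. Then u² < 2(1 - e^{-v}); equivalently, e^v - 1 - (u²/2)·e^v > 0. -/

import Mathlib

/-- The function `t ↦ t / (1 - e^{-t})`, extended continuously by the value `1` at `t = 0`. -/
noncomputable def F (t : ℝ) : ℝ := if t = 0 then 1 else t / (1 - Real.exp (-t))

lemma one_sub_exp_neg_ne_zero {x : ℝ} (hx : x ≠ 0) : 1 - Real.exp (-x) ≠ 0 := by
  intro h
  apply hx
  have : Real.exp (-x) = 1 := by linarith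
  have := Real.exp_eq_one_iff (-x) |>.mp this
  linarith

lemma contF : Continuous F := by
  rw [continuous_iff_continuousAt]
  intro x
  rcases eq_or_ne x 0 with rfl | hx
  · have hder : HasDerivAt (fun t : ℝ => 1 - Real.exp (-t)) 1 0 := by
      have h1 : HasDerivAt (fun t : ℝ => Real.exp (-t)) (-1 : ℝ) 0 := by
        simpa [Function.comp_def] using (Real.hasDerivAt_exp (-(0:ℝ))).comp 0 (hasDerivAt_neg 0)
      simpa [Pi.sub_def] using (hasDerivAt_const (0:ℝ) (1:ℝ)).sub h1
    have hslope : Filter.Tendsto (fun t : ℝ => (1 - Real.exp (-t)) / t)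
        (nhdsWithin 0 {(0:ℝ)}ᶜ) (nhds 1) := by
      have := hasDerivAt_iff_tendsto_slope.mp hder
      simpa [slope_fun_def, Real.exp_zero, div_eq_inv_mul] using this
    have hinv : Filter.Tendsto (fun t : ℝ => ((1 - Real.exp (-t)) / t)⁻¹)
        (nhdsWithin 0 {(0:ℝ)}ᶜ) (nhds 1) := by
      simpa using hslope.inv₀ one_ne_zero
    have : Filter.Tendsto F (nhdsWithin 0 {(0:ℝ)}ᶜ) (nhds 1) := by
      refine hinv.congr' ?_
      filter_upwards [self_mem_nhdsWithin] with t ht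
      simp only [Set.mem_compl_iff, Set.mem_singleton_iff] at ht
      simp [F, ht, inv_div]
    rw [← continuousWithinAt_compl_self]
    have hF0 : F 0 = 1 := by simp [F]
    unfold ContinuousWithinAt
    rw [hF0]
    exact this
  · have hne : 1 - Real.exp (-x) ≠ 0 := one_sub_exp_neg_ne_zero hx
    have hc : ContinuousAt (fun t : ℝ => t / (1 - Real.exp (-t))) x :=
      ContinuousAt.div continuousAt_id (by fun_prop) hne
    refine hc.congr ?_
    filter_upwards [isOpen_compl_singleton.mem_nhds (by simpa using hx)] with t ht
    simp only [Set.mem_compl_iff, Set.mem_singleton_iff] at ht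
    simp [F, ht]

theorem stmt_13 (u v : ℝ) (hu0 : 0 < u) (hu2 : u < Real.sqrt 2) (hv : 0 < v)
    (heq : v ^ 2 / u ^ 2 = ∫ t in (0 : ℝ)..v, F t) :
    u ^ 2 < 2 * (1 - Real.exp (-v)) ∧
    0 < Real.exp v - 1 - u ^ 2 / 2 * Real.exp v := by
  have hc : 0 < 1 - Real.exp (-v) := by
    have : Real.exp (-v) < 1 := Real.exp_lt_one_iff.mpr (by linarith)
    linarith
  have key : (∫ t in (0:ℝ)..v, t / (1 - Real.exp (-v))) < ∫ t in (0:ℝ)..v, F t := by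
    apply intervalIntegral.integral_lt_integral_of_continuousOn_of_le_of_exists_lt hv
    · exact (continuous_id.div_const _).continuousOn
    · exact contF.continuousOn
    · intro x hx
      have hx0 : 0 < x := hx.1
      have hxne : x ≠ 0 := ne_of_gt hx0
      have hdx : 0 < 1 - Real.exp (-x) := by
        have : Real.exp (-x) < 1 := Real.exp_lt_one_iff.mpr (by linarith)
        linarith
      have hle : 1 - Real.exp (-x) ≤ 1 - Real.exp (-v) := by
        have : Real.exp (-v) ≤ Real.exp (-x) := Real.exp_le_exp.mpr (by linarith [hx.2])
        linarith
      rw [F, if_neg hxne]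
      exact div_le_div_of_nonneg_left hx0.le hdx hle
    · refine ⟨0, ⟨le_refl 0, hv.le⟩, ?_⟩
      simp [F]
  have hint : (∫ t in (0:ℝ)..v, t / (1 - Real.exp (-v))) = v ^ 2 / 2 / (1 - Real.exp (-v)) := by
    rw [intervalIntegral.integral_div, integral_id]
    ring
  rw [hint, ← heq] at key
  have hfirst : u ^ 2 < 2 * (1 - Real.exp (-v)) := by
    rw [div_lt_div_iff₀ (by positivity) (by positivity)] at key
    nlinarith [sq_nonneg v, hv]
  refine ⟨hfirst, ?_⟩
  have hev : 0 < Real.exp v := Real.exp_pos v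
  have hprod : Real.exp (-v) * Real.exp v = 1 := by
    rw [← Real.exp_add]; simp
  nlinarith [hfirst, hev, hprod]
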